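/- Let S be a set of points in general position in the plane and let s, t be two distinct points of S. Then there exists a plane Hamiltonian path on S that starts at s and ends at t. -/

import Mathlib

open Set
open scoped Classical

noncomputable section

/-- Points in the plane. -/
abbrev Pt : Type := ℝ × ℝ

/-- Orientation determinant of the triple `(a, b, p)`:
positive iff `p` lies strictly to the left of the directed line from `a` to `b`. -/
def det3 (a b p : Pt) : ℝ :=
  (b.1 - a.1) * (p.2 - a.2) - (b.2 - a.2) * (p.1 - a.1)

/-- A finite point set is in general position if no three of its points are collinear. -/
def GenPos (S : Finset Pt) : Prop :=
  ∀ p ∈ S, ∀ q ∈ S, ∀ r ∈ S,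
    p ≠ q → p ≠ r → q ≠ r → ¬ Collinear ℝ ({p, q, r} : Set Pt)

/-- The list of (directed) edges of a polygonal path given by its list of vertices. -/
def edgeList (l : List Pt) : List (Pt × Pt) := l.zip l.tail

/-- The segment `ab` is an edge of the path `l`, i.e. `a` and `b` are consecutive on `l`. -/
def IsEdgeOf (a b : Pt) (l : List Pt) : Prop :=
  (a, b) ∈ edgeList l ∨ (b, a) ∈ edgeList l

/-- `l` is a plane (crossing-free) Hamiltonian path on the point set `S`:
its vertices are exactly the points of `S`, each visited once, and any two distinct
edges intersect only in common endpoints. -/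
def PlanePath (S : Finset Pt) (l : List Pt) : Prop :=
  l.Nodup ∧ l.toFinset = S ∧
  ∀ e ∈ edgeList l, ∀ f ∈ edgeList l, e ≠ f →
    segment ℝ e.1 e.2 ∩ segment ℝ f.1 f.2 ⊆
      (({e.1, e.2} : Set Pt) ∩ ({f.1, f.2} : Set Pt))

/-- Two paths are edge-disjoint: no segment is an edge of both. -/
def EdgeDisjoint (l₁ l₂ : List Pt) : Prop :=
  ∀ x y : Pt, IsEdgeOf x y l₁ → ¬ IsEdgeOf x y l₂

/-- `p` is a vertex of the boundary of the convex hull of `S`. -/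
def HullVertex (S : Finset Pt) (p : Pt) : Prop :=
  p ∈ Set.extremePoints ℝ (convexHull ℝ (S : Set Pt))

/-- `ab` is an edge of the boundary of the convex hull of `S`, i.e. `a` and `b` are
consecutive hull vertices: all other points of `S` lie strictly on one side of line `ab`. -/
def IsHullEdge (S : Finset Pt) (a b : Pt) : Prop :=
  a ∈ S ∧ b ∈ S ∧ a ≠ b ∧
  ((∀ p ∈ S, p ≠ a → p ≠ b → 0 < det3 a b p) ∨
   (∀ p ∈ S, p ≠ a → p ≠ b → det3 a b p < 0))

/-- The segment `xy` is a bridge over the line through `a` and `b`: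
it crosses the line `ℓ(ab)` but not the segment `ab`. -/
def IsBridge (a b x y : Pt) : Prop :=
  det3 a b x * det3 a b y < 0 ∧ segment ℝ x y ∩ segment ℝ a b = ∅

/-- The set of common edges of the two paths is exactly the segment `ab`. -/
def SharesExactly (a b : Pt) (l₁ l₂ : List Pt) : Prop :=
  IsEdgeOf a b l₁ ∧ IsEdgeOf a b l₂ ∧
  ∀ x y : Pt, IsEdgeOf x y l₁ → IsEdgeOf x y l₂ → ({x, y} : Set Pt) = ({a, b} : Set Pt)

/-!
Induction on `|S|`. A generic linear functional attains its maximum over `S` at a single point `p`,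
so some line through `p` has all other points strictly on one side. Seen from `p`, the two angular
extremes `q` of `S \ {p}` span hull edges `pq`, and prepending `p` to a plane path on `S \ {p}`
starting at `q` creates no crossing; one of the two choices has `q ≠ t`. This settles the case
`p = s` (and `p = t` by reversal). Otherwise the line `ps` splits `S \ {p}` into its closed side
containing `s` and its open side containing `t`; both sides together with `p` are smaller, so by
the previous construction they carry plane paths `s ⇝ p` and `p ⇝ t`, and the concatenation is
plane because the two halves meet only at `p`.
-/

lemma det3_swap_left (a b p : Pt) : det3 b a p = -det3 a b p := by
  simp only [det3]; ring

lemma det3_swap_right (a b p : Pt) : det3 a p b = -det3 a b p := by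
  simp only [det3]; ring

lemma det3_self_left (a b : Pt) : det3 a b a = 0 := by
  simp only [det3]; ring

lemma det3_self_right (a b : Pt) : det3 a b b = 0 := by
  simp only [det3]; ring

lemma det3_affineCombination (a b x y : Pt) {μ ν : ℝ} (h : μ + ν = 1) :
    det3 a b (μ • x + ν • y) = μ * det3 a b x + ν * det3 a b y := by
  obtain rfl : ν = 1 - μ := by linarith
  simp only [det3, Prod.smul_fst, Prod.smul_snd, Prod.fst_add, Prod.snd_add, smul_eq_mul]
  ring

lemma det3_nonpos_of_mem_segment {a b x y z : Pt} (hx : det3 a b x ≤ 0) (hy : det3 a b y ≤ 0)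
    (hz : z ∈ segment ℝ x y) : det3 a b z ≤ 0 := by
  obtain ⟨μ, ν, hμ, hν, hμν, rfl⟩ := hz
  rw [det3_affineCombination a b x y hμν]
  nlinarith [mul_nonneg hμ (neg_nonneg.mpr hx), mul_nonneg hν (neg_nonneg.mpr hy)]

lemma eq_of_mem_segment_of_det3_nonpos {a b c u v z : Pt} (hc : det3 a b c = 0)
    (hu : u = c ∨ 0 < det3 a b u) (hv : v = c ∨ 0 < det3 a b v)
    (hz : z ∈ segment ℝ u v) (hz₀ : det3 a b z ≤ 0) : z = c ∧ (u = c ∨ v = c) := by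
  obtain ⟨μ, ν, hμ, hν, hμν, rfl⟩ := hz
  rw [det3_affineCombination a b u v hμν] at hz₀
  rcases hu with rfl | hu <;> rcases hv with rfl | hv
  · exact ⟨by rw [← add_smul, hμν, one_smul], Or.inl rfl⟩
  · obtain rfl : ν = 0 := by nlinarith
    obtain rfl : μ = 1 := by linarith
    simp
  · obtain rfl : μ = 0 := by nlinarith
    obtain rfl : ν = 1 := by linarith
    simp
  · rcases hμ.eq_or_lt with rfl | hμ
    · obtain rfl : ν = 1 := by linarith
      linarith
    · nlinarith [mul_pos hμ hu, mul_nonneg hν hv.le]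

lemma collinear_of_det3_eq_zero {p q r : Pt} (hpq : p ≠ q) (h : det3 p q r = 0) :
    Collinear ℝ ({p, q, r} : Set Pt) := by
  have hn : 0 < (q.1 - p.1) ^ 2 + (q.2 - p.2) ^ 2 := by
    by_contra hle
    exact hpq (Prod.ext (by nlinarith) (by nlinarith))
  obtain ⟨c, hc⟩ : ∃ c : ℝ, AffineMap.lineMap p q c = r := by
    refine ⟨((q.1 - p.1) * (r.1 - p.1) + (q.2 - p.2) * (r.2 - p.2)) /
      ((q.1 - p.1) ^ 2 + (q.2 - p.2) ^ 2), ?_⟩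
    simp only [det3] at h
    ext <;> simp only [AffineMap.lineMap_apply_module', Prod.fst_add, Prod.snd_add,
      Prod.smul_fst, Prod.smul_snd, Prod.fst_sub, Prod.snd_sub, smul_eq_mul] <;> field_simp
    · linear_combination (q.2 - p.2) * h
    · linear_combination -(q.1 - p.1) * h
  have key :=
    collinear_insert_of_mem_affineSpan_pair (hc ▸ AffineMap.lineMap_mem_affineSpan_pair c p q)
  convert key using 1
  ext
  simp only [Set.mem_insert_iff, Set.mem_singleton_iff]
  tauto

lemma GenPos.mono {S T : Finset Pt} (h : GenPos S) (hTS : T ⊆ S) : GenPos T :=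
  fun p hp q hq r hr => h p (hTS hp) q (hTS hq) r (hTS hr)

lemma GenPos.det3_ne_zero {S : Finset Pt} (h : GenPos S) {p q r : Pt}
    (hp : p ∈ S) (hq : q ∈ S) (hr : r ∈ S) (hpq : p ≠ q) (hpr : p ≠ r) (hqr : q ≠ r) :
    det3 p q r ≠ 0 :=
  fun h₀ => h p hp q hq r hr hpq hpr hqr (collinear_of_det3_eq_zero hpq h₀)

lemma GenPos.eq_or_eq_of_mem_segment {S : Finset Pt} (h : GenPos S) {x y c : Pt}
    (hx : x ∈ S) (hy : y ∈ S) (hc : c ∈ S) (hxy : x ≠ y) (hcxy : c ∈ segment ℝ x y) :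
    c = x ∨ c = y := by
  by_contra! hne
  obtain ⟨μ, ν, -, -, hμν, rfl⟩ := hcxy
  refine h.det3_ne_zero hx hy hc hxy (Ne.symm hne.1) (Ne.symm hne.2) ?_
  rw [det3_affineCombination x y x y hμν, det3_self_left, det3_self_right]
  ring

def MeetAtEnds (e f : Pt × Pt) : Prop :=
  segment ℝ e.1 e.2 ∩ segment ℝ f.1 f.2 ⊆ ({e.1, e.2} : Set Pt) ∩ {f.1, f.2}

lemma MeetAtEnds.symm {e f : Pt × Pt} (h : MeetAtEnds e f) : MeetAtEnds f e :=
  fun _ hz => (h ⟨hz.2, hz.1⟩).symm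

lemma meetAtEnds_swap {e f : Pt × Pt} : MeetAtEnds e.swap f.swap ↔ MeetAtEnds e f := by
  simp only [MeetAtEnds, Prod.fst_swap, Prod.snd_swap, segment_symm ℝ e.2, segment_symm ℝ f.2,
    Set.pair_comm e.2, Set.pair_comm f.2]

lemma meetAtEnds_of_det3 {a b c x y u v : Pt} (hc : det3 a b c = 0)
    (hx : det3 a b x ≤ 0) (hy : det3 a b y ≤ 0) (hcxy : c ∈ segment ℝ x y → c = x ∨ c = y)
    (hu : u = c ∨ 0 < det3 a b u) (hv : v = c ∨ 0 < det3 a b v) :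
    MeetAtEnds (x, y) (u, v) := by
  rintro z ⟨hzxy, hzuv⟩
  obtain ⟨rfl, hzuv'⟩ :=
    eq_of_mem_segment_of_det3_nonpos hc hu hv hzuv (det3_nonpos_of_mem_segment hx hy hzxy)
  exact ⟨hcxy hzxy, hzuv'.imp Eq.symm Eq.symm⟩

def CrossFree (E : List (Pt × Pt)) : Prop :=
  ∀ e ∈ E, ∀ f ∈ E, e ≠ f → MeetAtEnds e f

lemma crossFree_singleton (e : Pt × Pt) : CrossFree [e] := by
  simp [CrossFree]

lemma CrossFree.append {E F : List (Pt × Pt)} (hE : CrossFree E) (hF : CrossFree F)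
    (hEF : ∀ e ∈ E, ∀ f ∈ F, MeetAtEnds e f) : CrossFree (E ++ F) := by
  intro e he f hf hef
  rcases List.mem_append.mp he with he | he <;> rcases List.mem_append.mp hf with hf | hf
  exacts [hE e he f hf hef, hEF e he f hf, (hEF f hf e he).symm, hF e he f hf hef]

lemma planePath_iff {S : Finset Pt} {l : List Pt} :
    PlanePath S l ↔ l.Nodup ∧ l.toFinset = S ∧ CrossFree (edgeList l) :=
  Iff.rfl

lemma edgeList_cons_cons (a b : Pt) (l : List Pt) :
    edgeList (a :: b :: l) = (a, b) :: edgeList (b :: l) :=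
  rfl

lemma mem_edgeList_iff_infix {l : List Pt} {u v : Pt} : (u, v) ∈ edgeList l ↔ [u, v] <:+: l := by
  induction l with
  | nil => simp [edgeList]
  | cons a l ih =>
    cases l with
    | nil => simpa [edgeList] using fun h : [u, v] <:+: [a] => h.length_le
    | cons b l =>
      rw [edgeList_cons_cons, List.mem_cons, ih, List.infix_cons_iff (l₂ := b :: l)]
      simp only [Prod.mk.injEq, List.cons_prefix_cons, List.nil_prefix, and_true]

lemma mem_edgeList_reverse {l : List Pt} {e : Pt × Pt} :
    e ∈ edgeList l.reverse ↔ e.swap ∈ edgeList l := by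
  rw [mem_edgeList_iff_infix, mem_edgeList_iff_infix, ← List.reverse_infix, List.reverse_reverse]
  rfl

lemma edgeList_append_cons (l₁ : List Pt) (x : Pt) (l₂ : List Pt) :
    edgeList (l₁ ++ x :: l₂) = edgeList (l₁ ++ [x]) ++ edgeList (x :: l₂) := by
  induction l₁ with
  | nil => rfl
  | cons a l₁ ih =>
    cases l₁ with
    | nil => rfl
    | cons b l₁ =>
      simp only [List.cons_append, edgeList_cons_cons] at ih ⊢
      rw [ih]

lemma PlanePath.mem_of_mem_edgeList {S : Finset Pt} {l : List Pt} (h : PlanePath S l) :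
    ∀ e ∈ edgeList l, e.1 ∈ S ∧ e.2 ∈ S ∧ e.1 ≠ e.2 := by
  rintro ⟨u, v⟩ he
  rw [mem_edgeList_iff_infix] at he
  obtain ⟨hnd, rfl, -⟩ := h
  have huv : [u, v].Nodup := hnd.sublist he.sublist
  simp only [List.mem_toFinset]
  exact ⟨he.subset (by simp), he.subset (by simp), by simpa using huv⟩

lemma PlanePath.reverse {S : Finset Pt} {l : List Pt} (h : PlanePath S l) :
    PlanePath S l.reverse := by
  rw [planePath_iff] at h ⊢
  obtain ⟨hnd, hS, hcr⟩ := h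
  refine ⟨List.nodup_reverse.mpr hnd, by rwa [List.toFinset_reverse], ?_⟩
  intro e he f hf hef
  rw [← meetAtEnds_swap]
  exact hcr _ (mem_edgeList_reverse.mp he) _ (mem_edgeList_reverse.mp hf)
    (fun h => hef (Prod.swap_injective h))

lemma IsHullEdge.meetAtEnds {S : Finset Pt} {p q u v : Pt} (h : IsHullEdge S p q)
    (hu : u ∈ S) (hup : u ≠ p) (hv : v ∈ S) (hvp : v ≠ p) : MeetAtEnds (p, q) (u, v) := by
  obtain ⟨-, -, -, hpos | hneg⟩ := h
  · refine meetAtEnds_of_det3 (det3_self_right p q) (det3_self_left p q).le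
      (det3_self_right p q).le (fun _ => Or.inr rfl) ?_ ?_
    · exact (em (u = q)).imp_right (hpos u hu hup)
    · exact (em (v = q)).imp_right (hpos v hv hvp)
  · refine meetAtEnds_of_det3 (det3_self_left q p) (det3_self_right q p).le
      (det3_self_left q p).le (fun _ => Or.inr rfl) ?_ ?_
    · refine (em (u = q)).imp_right fun huq => ?_
      rw [det3_swap_left]
      exact neg_pos.mpr (hneg u hu hup huq)
    · refine (em (v = q)).imp_right fun hvq => ?_
      rw [det3_swap_left]
      exact neg_pos.mpr (hneg v hv hvp hvq)

lemma PlanePath.cons_of_isHullEdge {S : Finset Pt} {p q : Pt} {l : List Pt}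
    (hpq : IsHullEdge S p q) (h : PlanePath (S.erase p) (q :: l)) :
    PlanePath S (p :: q :: l) := by
  have hedge := h.mem_of_mem_edgeList
  rw [planePath_iff] at h ⊢
  obtain ⟨hnd, hS, hcr⟩ := h
  have hpl : p ∉ q :: l := fun hp => by
    simpa [hS] using List.mem_toFinset.mpr hp
  refine ⟨List.nodup_cons.mpr ⟨hpl, hnd⟩, by rw [List.toFinset_cons, hS,
    Finset.insert_erase hpq.1], ?_⟩
  rw [edgeList_cons_cons, ← List.singleton_append]
  refine (crossFree_singleton _).append hcr ?_
  rintro e he ⟨u, v⟩ hf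
  obtain ⟨hu, hv, -⟩ := hedge _ hf
  rw [List.mem_singleton.mp he]
  exact hpq.meetAtEnds (Finset.mem_of_mem_erase hu) (Finset.ne_of_mem_erase hu)
    (Finset.mem_of_mem_erase hv) (Finset.ne_of_mem_erase hv)

lemma PlanePath.append_of_separated {S₁ S₂ : Finset Pt} {l₁ l₂ : List Pt} {a b p : Pt}
    (h₁ : PlanePath S₁ (l₁ ++ [p])) (hgp : GenPos S₁) (h₂ : PlanePath S₂ (p :: l₂))
    (hp : det3 a b p = 0) (hS₁ : ∀ u ∈ S₁, det3 a b u ≤ 0)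
    (hS₂ : ∀ u ∈ S₂, u ≠ p → 0 < det3 a b u) :
    PlanePath (S₁ ∪ S₂) (l₁ ++ p :: l₂) := by
  have hedge₁ := h₁.mem_of_mem_edgeList
  have hedge₂ := h₂.mem_of_mem_edgeList
  rw [planePath_iff] at h₁ h₂ ⊢
  obtain ⟨hnd₁, rfl, hcr₁⟩ := h₁
  obtain ⟨hnd₂, rfl, hcr₂⟩ := h₂
  have hmem₁ : ∀ u ∈ l₁ ++ [p], u ∈ (l₁ ++ [p]).toFinset := fun u => List.mem_toFinset.mpr
  have hmem₂ : ∀ u ∈ p :: l₂, u ∈ (p :: l₂).toFinset := fun u => List.mem_toFinset.mpr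
  have hpl₂ : p ∉ l₂ := (List.nodup_cons.mp hnd₂).1
  refine ⟨?_, ?_, ?_⟩
  · rw [← List.singleton_append, ← List.append_assoc, List.nodup_append]
    refine ⟨hnd₁, (List.nodup_cons.mp hnd₂).2, fun u hu₁ v hv₂ huv => ?_⟩
    subst huv
    have hup : u ≠ p := fun hup => hpl₂ (hup ▸ hv₂)
    exact absurd (hS₁ u (hmem₁ u hu₁)) (not_le.mpr (hS₂ u (hmem₂ u (by simp [hv₂])) hup))
  · ext u
    simp only [List.mem_toFinset, Finset.mem_union, List.mem_append, List.mem_cons,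
      List.not_mem_nil]
    tauto
  · rw [edgeList_append_cons]
    refine hcr₁.append hcr₂ ?_
    rintro ⟨x, y⟩ he ⟨u, v⟩ hf
    obtain ⟨hx, hy, hxy⟩ := hedge₁ _ he
    obtain ⟨hu, hv, -⟩ := hedge₂ _ hf
    exact meetAtEnds_of_det3 hp (hS₁ x hx) (hS₁ y hy)
      (hgp.eq_or_eq_of_mem_segment hx hy (hmem₁ p (by simp)) hxy)
      ((em (u = p)).imp_right (hS₂ u hu)) ((em (v = p)).imp_right (hS₂ v hv))

/-- The cotangent of the angle at `p` from the ray `pr` to the ray `pu`; it orders the points to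
the left of `pr` by their angle around `p`. -/
def cotAngle (p r u : Pt) : ℝ :=
  ((r.1 - p.1) * (u.1 - p.1) + (r.2 - p.2) * (u.2 - p.2)) / det3 p r u

lemma det3_pos_iff_cotAngle_lt {p r u v : Pt} (hu : 0 < det3 p r u) (hv : 0 < det3 p r v) :
    0 < det3 p u v ↔ cotAngle p r v < cotAngle p r u := by
  have hrp : r ≠ p := by
    rintro rfl
    simp [det3] at hu
  have hN : 0 < (r.1 - p.1) ^ 2 + (r.2 - p.2) ^ 2 := by
    by_contra hle
    exact hrp (Prod.ext (by nlinarith) (by nlinarith))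
  have key : cotAngle p r u - cotAngle p r v =
      ((r.1 - p.1) ^ 2 + (r.2 - p.2) ^ 2) * det3 p u v / (det3 p r u * det3 p r v) := by
    simp only [cotAngle]
    field_simp
    simp only [det3]
    ring
  rw [iff_comm, ← sub_pos, key, div_pos_iff_of_pos_right (mul_pos hu hv),
    mul_pos_iff_of_pos_left hN]

lemma exists_strictly_supported_point {S : Finset Pt} (hS : S.Nonempty) :
    ∃ p ∈ S, ∃ r : Pt, ∀ u ∈ S, u ≠ p → 0 < det3 p r u := by
  obtain ⟨c, hc⟩ :=
    Finset.exists_notMem ((S ×ˢ S).image fun w => (w.1.1 - w.2.1) / (w.2.2 - w.1.2))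
  have hinj : ∀ u ∈ S, ∀ v ∈ S, u ≠ v → u.1 + c * u.2 ≠ v.1 + c * v.2 := by
    intro u hu v hv huv heq
    by_cases h₂ : u.2 = v.2
    · exact huv (Prod.ext (by rw [h₂] at heq; linarith) h₂)
    · refine hc (Finset.mem_image.mpr ⟨(u, v), Finset.mem_product.mpr ⟨hu, hv⟩, ?_⟩)
      field_simp [sub_ne_zero.mpr (Ne.symm h₂)]
      linarith
  obtain ⟨p, hp, hmax⟩ := S.exists_max_image (fun u => u.1 + c * u.2) hS
  refine ⟨p, hp, (p.1 - c, p.2 + 1), fun u hu hup => ?_⟩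
  have hlt := lt_of_le_of_ne (hmax u hu) (hinj u hu p hp hup)
  simp only [det3]
  linarith

lemma GenPos.det3_pos_of_cotAngle_le {S : Finset Pt} {p r q w : Pt} (hgp : GenPos S)
    (hp : p ∈ S) (hr : ∀ u ∈ S, u ≠ p → 0 < det3 p r u) (hq : q ∈ S.erase p)
    (hw : w ∈ S.erase p) (hqw : q ≠ w) (hle : cotAngle p r w ≤ cotAngle p r q) :
    0 < det3 p q w := by
  obtain ⟨hqp, hqS⟩ := Finset.mem_erase.mp hq
  obtain ⟨hwp, hwS⟩ := Finset.mem_erase.mp hw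
  refine (hgp.det3_ne_zero hp hqS hwS (Ne.symm hqp) (Ne.symm hwp) hqw).lt_or_gt.resolve_left
    fun hneg => hle.not_gt ?_
  rw [← det3_pos_iff_cotAngle_lt (hr w hwS hwp) (hr q hqS hqp), det3_swap_right]
  exact neg_pos.mpr hneg

/-- The hull edges at `p` go to the two angular extremes of `S \ {p}` seen from `p`. -/
lemma exists_isHullEdge_of_supported {S : Finset Pt} {p r t : Pt} (hgp : GenPos S) (hp : p ∈ S)
    (hr : ∀ u ∈ S, u ≠ p → 0 < det3 p r u) (ht : t ∈ S) (htp : t ≠ p) :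
    ∃ q, IsHullEdge S p q ∧ (q = t → S.erase p = {t}) := by
  have hpos := fun {q w} => hgp.det3_pos_of_cotAngle_le (q := q) (w := w) hp hr
  have htT : t ∈ S.erase p := Finset.mem_erase.mpr ⟨htp, ht⟩
  obtain ⟨q₁, hq₁, hmax⟩ := (S.erase p).exists_max_image (cotAngle p r) ⟨t, htT⟩
  obtain ⟨q₂, hq₂, hmin⟩ := (S.erase p).exists_min_image (cotAngle p r) ⟨t, htT⟩
  have hedge₁ : IsHullEdge S p q₁ :=
    ⟨hp, Finset.mem_of_mem_erase hq₁, (Finset.ne_of_mem_erase hq₁).symm,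
      Or.inl fun w hw hwp hwq =>
        have hw' := Finset.mem_erase.mpr ⟨hwp, hw⟩
        hpos hq₁ hw' (Ne.symm hwq) (hmax w hw')⟩
  have hedge₂ : IsHullEdge S p q₂ :=
    ⟨hp, Finset.mem_of_mem_erase hq₂, (Finset.ne_of_mem_erase hq₂).symm,
      Or.inr fun w hw hwp hwq => by
        have hw' := Finset.mem_erase.mpr ⟨hwp, hw⟩
        have := hpos hw' hq₂ hwq (hmin w hw')
        rw [det3_swap_right] at this
        exact neg_pos.mp this⟩
  by_cases hq₁t : q₁ = t
  · by_cases hq₂t : q₂ = t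
    · rw [hq₁t] at hmax hedge₁
      rw [hq₂t] at hmin
      refine ⟨t, hedge₁, fun _ => Finset.eq_singleton_iff_unique_mem.mpr ⟨htT, fun w hw => ?_⟩⟩
      by_contra hwt
      have h₁ := hpos htT hw (Ne.symm hwt) (hmax w hw)
      have h₂ := hpos hw htT hwt (hmin w hw)
      rw [det3_swap_right] at h₂
      linarith
    · exact ⟨q₂, hedge₂, fun h => absurd h hq₂t⟩
  · exact ⟨q₁, hedge₁, fun h => absurd h hq₁t⟩

lemma planePath_singleton (a : Pt) : PlanePath {a} [a] :=
  ⟨List.nodup_singleton a, by simp, fun e he => by simp [edgeList] at he⟩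

def PlaneHamiltonianConnected (S : Finset Pt) : Prop :=
  ∀ s ∈ S, ∀ t ∈ S, s ≠ t → ∃ l, PlanePath S l ∧ l.head? = some s ∧ l.getLast? = some t

lemma exists_planePath_of_supported {S : Finset Pt} {p r t : Pt} (hgp : GenPos S) (hp : p ∈ S)
    (hr : ∀ u ∈ S, u ≠ p → 0 < det3 p r u) (ht : t ∈ S) (htp : t ≠ p)
    (IH : PlaneHamiltonianConnected (S.erase p)) :
    ∃ l, PlanePath S l ∧ l.head? = some p ∧ l.getLast? = some t := by
  obtain ⟨q, hpq, hqt⟩ := exists_isHullEdge_of_supported hgp hp hr ht htp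
  obtain ⟨l, hl, hlast⟩ :
      ∃ l, PlanePath (S.erase p) (q :: l) ∧ (q :: l).getLast? = some t := by
    by_cases hq : q = t
    · subst hq
      exact ⟨[], hqt rfl ▸ planePath_singleton q, rfl⟩
    · obtain ⟨l', hl', hhead, hlast⟩ := IH q (Finset.mem_erase.mpr ⟨hpq.2.2.1.symm, hpq.2.1⟩)
        t (Finset.mem_erase.mpr ⟨htp, ht⟩) hq
      obtain ⟨l, rfl⟩ := List.head?_eq_some_iff.mp hhead
      exact ⟨l, hl', hlast⟩
  exact ⟨p :: q :: l, hl.cons_of_isHullEdge hpq, rfl, by rwa [List.getLast?_cons_cons]⟩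

lemma exists_planePath_of_split {S : Finset Pt} {p r s t a b : Pt} (hgp : GenPos S)
    (IH : ∀ T ⊂ S, PlaneHamiltonianConnected T) (hp : p ∈ S)
    (hr : ∀ u ∈ S, u ≠ p → 0 < det3 p r u) (hs : s ∈ S) (ht : t ∈ S) (hsp : s ≠ p)
    (htp : t ≠ p) (hap : det3 a b p = 0) (has : det3 a b s ≤ 0) (hat : 0 < det3 a b t) :
    ∃ l, PlanePath S l ∧ l.head? = some s ∧ l.getLast? = some t := by
  set A := (S.erase p).filter (det3 a b · ≤ 0)
  set B := (S.erase p).filter (0 < det3 a b ·)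
  have hpA : p ∉ A := by simp [A]
  have hpB : p ∉ B := by simp [B]
  have hAS : insert p A ⊆ S := Finset.insert_subset hp (by intro u; simp +contextual [A])
  have hBS : insert p B ⊆ S := Finset.insert_subset hp (by intro u; simp +contextual [B])
  have hsA : s ∈ insert p A := by simp [A, hs, hsp, has]
  have htB : t ∈ insert p B := by simp [B, ht, htp, hat]
  obtain ⟨l₁, h₁, hhead₁, hlast₁⟩ := exists_planePath_of_supported (hgp.mono hAS)
    (Finset.mem_insert_self p A) (fun u hu => hr u (hAS hu)) hsA hsp
    (by rw [Finset.erase_insert hpA]; exact IH A ((Finset.ssubset_insert hpA).trans_subset hAS))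
  obtain ⟨l₂, h₂, hhead₂, hlast₂⟩ := exists_planePath_of_supported (hgp.mono hBS)
    (Finset.mem_insert_self p B) (fun u hu => hr u (hBS hu)) htB htp
    (by rw [Finset.erase_insert hpB]; exact IH B ((Finset.ssubset_insert hpB).trans_subset hBS))
  obtain ⟨m₁, rfl⟩ := List.head?_eq_some_iff.mp hhead₁
  obtain ⟨m₂, rfl⟩ := List.head?_eq_some_iff.mp hhead₂
  have hunion : insert p A ∪ insert p B = S := by
    refine (Finset.union_subset hAS hBS).antisymm fun u hu => ?_
    by_cases hup : u = p
    · simp [hup]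
    · rcases le_or_gt (det3 a b u) 0 with h | h <;> simp [A, B, hu, hup, h]
  have h₁' : PlanePath (insert p A) (m₁.reverse ++ [p]) := by simpa using h₁.reverse
  have hpath := h₁'.append_of_separated (hgp.mono hAS) h₂ hap
    (fun u hu => by rcases Finset.mem_insert.mp hu with rfl | hu <;> simp_all [A])
    (fun u hu hup => by simp_all [B])
  rw [hunion] at hpath
  refine ⟨_, hpath, ?_, by rw [List.getLast?_append, hlast₂]; rfl⟩
  rw [show m₁.reverse ++ p :: m₂ = (p :: m₁).reverse ++ m₂ by simp, List.head?_append,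
    List.head?_reverse, hlast₁]
  rfl

theorem GenPos.planeHamiltonianConnected {S : Finset Pt} (hgp : GenPos S) :
    PlaneHamiltonianConnected S := by
  induction S using Finset.strongInduction with
  | H S ih =>
  intro s hs t ht hst
  have IH : ∀ T ⊂ S, PlaneHamiltonianConnected T := fun T hT => ih T hT (hgp.mono hT.subset)
  obtain ⟨p, hp, r, hr⟩ := exists_strictly_supported_point ⟨s, hs⟩
  by_cases hps : p = s
  · subst hps
    exact exists_planePath_of_supported hgp hp hr ht (Ne.symm hst) (IH _ (Finset.erase_ssubset hp))
  by_cases hpt : p = t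
  · subst hpt
    obtain ⟨l, hl, hhead, hlast⟩ := exists_planePath_of_supported hgp hp hr hs (Ne.symm hps)
      (IH _ (Finset.erase_ssubset hp))
    exact ⟨l.reverse, hl.reverse, by rwa [List.head?_reverse], by rwa [List.getLast?_reverse]⟩
  rcases (hgp.det3_ne_zero hp hs ht hps hpt hst).lt_or_gt with h | h
  · refine exists_planePath_of_split hgp IH hp hr hs ht (Ne.symm hps) (Ne.symm hpt)
      (det3_self_right s p) (det3_self_left s p).le ?_
    rw [det3_swap_left]
    exact neg_pos.mpr h
  · exact exists_planePath_of_split hgp IH hp hr hs ht (Ne.symm hps) (Ne.symm hpt)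
      (det3_self_left p s) (det3_self_right p s).le h

/-- On any point set in general position there is a plane Hamiltonian
path with prescribed distinct endpoints `s` and `t`. -/
theorem stmt_1 (S : Finset Pt) (hgp : GenPos S)
    (s t : Pt) (hs : s ∈ S) (ht : t ∈ S) (hst : s ≠ t) :
    ∃ l : List Pt, PlanePath S l ∧ l.head? = some s ∧ l.getLast? = some t :=
  hgp.planeHamiltonianConnected s hs t ht hst
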